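/- arXiv:1411.2423 — 2 statements merged into one kernel-verified Lean document; each statement's English description precedes it below -/
import Mathlib

section
/- Let n ≥ 3 be an integer, b > 0, and let β : ℝ → ℝ be a smooth function satisfying conditions (beta) on [0,b]. Define α : ℝ → ℝ by α(r) = α₀ − ∫₀^r √(1 − β'(u)²) du, where α₀ = ∫₀^b √(1 − β'(u)²) du. Then there exists c₀ > 0 such that for every c ≥ c₀ and every r ∈ (0,b): (n−1)(n−2)·(1 − β'(r)²)/β(r)² − (2(n−1)/β(r))·(β''(r) + β'(r)·α'(r)/(c + α(r))) − 2·α''(r)/(c + α(r)) > 0. (This expression is the scalar curvature of the bent cylinder metric dr² + β(r)²·ds²_{n−1} + (c + α(r))²·dl², so for sufficiently large c the bent cylinder metric has positive scalar curvature.) -/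
/-- Conditions (beta) for a smooth function `β : ℝ → ℝ` on `[0,b]`. -/
def BetaConditions (b : ℝ) (β : ℝ → ℝ) : Prop :=
  ContDiff ℝ (⊤ : ℕ∞) β ∧
  β 0 = 0 ∧ β b = 0 ∧
  deriv β 0 = 1 ∧ deriv β b = -1 ∧
  (∀ k : ℕ, 1 ≤ k → iteratedDeriv (2 * k) β 0 = 0 ∧ iteratedDeriv (2 * k) β b = 0) ∧
  (∀ r ∈ Set.Icc (0 : ℝ) b, iteratedDeriv 2 β r ≤ 0) ∧
  iteratedDeriv 3 β 0 < 0 ∧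
  0 < iteratedDeriv 3 β b ∧
  (∃ ε > (0 : ℝ), (∀ r ∈ Set.Ioo (0 : ℝ) ε, iteratedDeriv 2 β r < 0) ∧
    (∀ r ∈ Set.Ioo (b - ε) b, iteratedDeriv 2 β r < 0)) ∧
  (∀ r ∈ Set.Ioo (0 : ℝ) b, 0 < β r)

/-
Write `p = β'`, `q = β''`, `w = √(1 - p²) = -α'` and `s = c + α ≥ c`. Clearing denominators, the
scalar curvature is a positive multiple of `(n-1)(n-2) w³ s - 2(n-1) q β w s + 2(n-1) p w² β
- 2 p q β²`. The first two terms are nonnegative, so once `β ≤ L w` and `|q| ≤ L w` on `(0, b)`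
the remaining two are `O(w³)` and a large `s` wins. These estimates say that `q²` and `β²` are
`O(1 - p²)`. On compact subsets of `(0, b)` this holds because `|p| < 1` there. Near `0`,
`β''' ≤ -a < 0` forces `1 - p ≥ a x² / 2`, while `|q| ≤ K x` and `0 ≤ β ≤ x`; near `b` the
same argument applies after the reflection `x ↦ b - x`.
-/

open Set Real

theorem iteratedDeriv_two_eq_deriv_deriv {f : ℝ → ℝ} : iteratedDeriv 2 f = deriv (deriv f) := by
  simp [iteratedDeriv_succ]

theorem iteratedDeriv_three_eq_deriv_deriv_deriv {f : ℝ → ℝ} :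
    iteratedDeriv 3 f = deriv (deriv (deriv f)) := by
  simp [iteratedDeriv_succ]

theorem le_of_deriv_le_of_le_left {f g f' g' : ℝ → ℝ} {a b : ℝ}
    (hf : ∀ x ∈ Icc a b, HasDerivAt f (f' x) x) (hg : ∀ x ∈ Icc a b, HasDerivAt g (g' x) x)
    (ha : f a ≤ g a) (h : ∀ x ∈ Ico a b, f' x ≤ g' x) : ∀ x ∈ Icc a b, f x ≤ g x :=
  image_le_of_deriv_right_le_deriv_boundary
    (fun x hx => (hf x hx).continuousAt.continuousWithinAt)
    (fun x hx => (hf x (Ico_subset_Icc_self hx)).hasDerivWithinAt) ha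
    (fun x hx => (hg x hx).continuousAt.continuousWithinAt)
    (fun x hx => (hg x (Ico_subset_Icc_self hx)).hasDerivWithinAt) h

theorem IsCompact.exists_le_mul_of_pos {X : Type*} [TopologicalSpace X] {s : Set X}
    (hs : IsCompact s) {f g : X → ℝ} (hf : ContinuousOn f s) (hg : ContinuousOn g s)
    (hpos : ∀ x ∈ s, 0 < g x) : ∃ C, ∀ x ∈ s, f x ≤ C * g x := by
  obtain ⟨C, hC⟩ := hs.bddAbove_image (hf.div hg fun x hx => (hpos x hx).ne')
  exact ⟨C, fun x hx => (div_le_iff₀ (hpos x hx)).1 (hC (mem_image_of_mem _ hx))⟩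

theorem abs_le_sqrt_mul_of_sq_le {x C w : ℝ} (hw : 0 ≤ w) (h : x ^ 2 ≤ C * w ^ 2) :
    |x| ≤ √C * w := by
  have := Real.abs_le_sqrt h
  rwa [Real.sqrt_mul' C (sq_nonneg w), Real.sqrt_sq hw] at this

theorem deriv_const_sub_integral {g : ℝ → ℝ} (hg : Continuous g) (A a : ℝ) :
    deriv (fun r => A - ∫ u in a..r, g u) = fun r => -g r := by
  funext r
  exact ((hasDerivAt_const r A).sub (hg.integral_hasStrictDerivAt a r).hasDerivAt).deriv.trans
    (zero_sub _)

theorem deriv_neg_sqrt_one_sub_sq {f : ℝ → ℝ} {x : ℝ} (hf : DifferentiableAt ℝ f x)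
    (hx : f x ^ 2 < 1) :
    deriv (fun y => -√(1 - f y ^ 2)) x = f x * deriv f x / √(1 - f x ^ 2) := by
  have hpos : 0 < 1 - f x ^ 2 := by linarith
  have h := (((hasDerivAt_const x 1).fun_sub (hf.hasDerivAt.fun_pow 2)).sqrt hpos.ne').fun_neg
  rw [h.deriv]
  have : √(1 - f x ^ 2) ≠ 0 := (Real.sqrt_pos.2 hpos).ne'
  field_simp
  ring

theorem integral_sub_integral_nonneg {g : ℝ → ℝ} (hg : Continuous g) (hg0 : ∀ u, 0 ≤ g u)
    {a b r : ℝ} (hrb : r ≤ b) : 0 ≤ (∫ u in a..b, g u) - ∫ u in a..r, g u := by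
  rw [intervalIntegral.integral_interval_sub_left (hg.intervalIntegrable _ _)
    (hg.intervalIntegrable _ _)]
  exact intervalIntegral.integral_nonneg hrb fun u _ => hg0 u

theorem sq_add_sq_le_mul_one_sub_sq_of_third_deriv_le {f p q t : ℝ → ℝ} {a K δ : ℝ}
    (ha : 0 < a) (hf : ∀ x ∈ Icc 0 δ, HasDerivAt f (p x) x)
    (hp : ∀ x ∈ Icc 0 δ, HasDerivAt p (q x) x) (hq : ∀ x ∈ Icc 0 δ, HasDerivAt q (t x) x)
    (h0 : f 0 = 0) (h1 : p 0 = 1) (h2 : q 0 = 0)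
    (ht : ∀ x ∈ Icc 0 δ, -K ≤ t x ∧ t x ≤ -a) (hp0 : ∀ x ∈ Icc 0 δ, 0 ≤ p x) :
    ∀ x ∈ Icc 0 δ, q x ^ 2 + f x ^ 2 ≤ 2 * (K ^ 2 + 1) / a * (1 - p x ^ 2) := by
  have ht' : ∀ x ∈ Ico 0 δ, -K ≤ t x ∧ t x ≤ -a := fun x hx => ht x (Ico_subset_Icc_self hx)
  have hq_le : ∀ x ∈ Icc 0 δ, q x ≤ -a * x :=
    le_of_deriv_le_of_le_left hq
      (fun x _ => (hasDerivAt_id x).const_mul (-a) |>.congr_deriv (mul_one _))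
      (by simp [h2]) fun x hx => (ht' x hx).2
  have hq_ge : ∀ x ∈ Icc 0 δ, -K * x ≤ q x :=
    le_of_deriv_le_of_le_left
      (fun x _ => (hasDerivAt_id x).const_mul (-K) |>.congr_deriv (mul_one _))
      hq (by simp [h2]) fun x hx => (ht' x hx).1
  have hp_le : ∀ x ∈ Icc 0 δ, p x ≤ 1 - a / 2 * x ^ 2 :=
    le_of_deriv_le_of_le_left (g' := fun x => -a * x) hp
      (fun x _ => ((hasDerivAt_pow 2 x).const_mul (a / 2)).const_sub 1 |>.congr_deriv (by ring))
      (by simp [h1]) fun x hx => hq_le x (Ico_subset_Icc_self hx)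
  have hf_le : ∀ x ∈ Icc 0 δ, f x ≤ x :=
    le_of_deriv_le_of_le_left hf (fun x _ => hasDerivAt_id x) (by simp [h0]) fun x hx => by
      nlinarith [hp_le x (Ico_subset_Icc_self hx), sq_nonneg x]
  have hf_ge : ∀ x ∈ Icc 0 δ, 0 ≤ f x :=
    le_of_deriv_le_of_le_left (fun x _ => hasDerivAt_const x 0) hf (by simp [h0])
      fun x hx => hp0 x (Ico_subset_Icc_self hx)
  intro x hx
  have hK : 0 ≤ K := by linarith [ht 0 ⟨le_rfl, hx.1.trans hx.2⟩]
  have hq2 : q x ^ 2 ≤ K ^ 2 * x ^ 2 := by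
    nlinarith [hq_le x hx, hq_ge x hx, mul_nonneg ha.le hx.1, mul_nonneg hK hx.1]
  have hf2 : f x ^ 2 ≤ x ^ 2 := by nlinarith [hf_le x hx, hf_ge x hx]
  have hp2 : a * x ^ 2 / 2 ≤ 1 - p x ^ 2 := by
    nlinarith [hp_le x hx, hp0 x hx, mul_nonneg ha.le (sq_nonneg x)]
  calc q x ^ 2 + f x ^ 2 ≤ (K ^ 2 + 1) * x ^ 2 := by linarith
    _ = 2 * (K ^ 2 + 1) / a * (a * x ^ 2 / 2) := by field_simp
    _ ≤ 2 * (K ^ 2 + 1) / a * (1 - p x ^ 2) := mul_le_mul_of_nonneg_left hp2 (by positivity)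

theorem exists_sq_add_sq_le_mul_one_sub_deriv_sq_Icc_zero {f : ℝ → ℝ} (hf : ContDiff ℝ 3 f)
    (h0 : f 0 = 0) (h1 : deriv f 0 = 1) (h2 : deriv (deriv f) 0 = 0)
    (h3 : iteratedDeriv 3 f 0 < 0) :
    ∃ δ > 0, ∃ C, ∀ x ∈ Icc 0 δ,
      deriv (deriv f) x ^ 2 + f x ^ 2 ≤ C * (1 - deriv f x ^ 2) := by
  have hdp : Differentiable ℝ (deriv f) := (hf.of_le (by norm_num)).differentiable_deriv_two
  have hdq : Differentiable ℝ (deriv (deriv f)) := (hf.deriv' (n := 2)).differentiable_deriv_two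
  have hq' (x : ℝ) : HasDerivAt (deriv (deriv f)) (iteratedDeriv 3 f x) x :=
    iteratedDeriv_three_eq_deriv_deriv_deriv (f := f) ▸ (hdq x).hasDerivAt
  set t := iteratedDeriv 3 f
  have hev : ∀ᶠ x in nhds 0, t 0 - 1 < t x ∧ t x < t 0 / 2 ∧ 0 < deriv f x := by
    have ht := (hf.continuous_iteratedDeriv 3 le_rfl).continuousAt (x := 0)
    refine (ht.eventually_const_lt ?_).and ((ht.eventually_lt_const ?_).and
      (hdp.continuous.continuousAt.eventually_const_lt ?_)) <;> linarith
  obtain ⟨δ, hδ, hball⟩ := Metric.nhds_basis_closedBall.eventually_iff.1 hev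
  have hI (x : ℝ) (hx : x ∈ Icc 0 δ) : t 0 - 1 < t x ∧ t x < t 0 / 2 ∧ 0 < deriv f x :=
    hball (by rw [Real.closedBall_eq_Icc]; constructor <;> linarith [hx.1, hx.2])
  refine ⟨δ, hδ, _, sq_add_sq_le_mul_one_sub_sq_of_third_deriv_le (a := -t 0 / 2) (K := 1 - t 0)
    (by linarith) (fun x _ => (hf.differentiable (by norm_num) x).hasDerivAt)
    (fun x _ => (hdp x).hasDerivAt) (fun x _ => hq' x) h0 h1 h2
    (fun x hx => ⟨by linarith [(hI x hx).1], by linarith [(hI x hx).2.1]⟩)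
    fun x hx => (hI x hx).2.2.le⟩

theorem exists_sq_add_sq_le_mul_one_sub_deriv_sq_Icc_sub {f : ℝ → ℝ} {b : ℝ}
    (hf : ContDiff ℝ 3 f)
    (h0 : f b = 0) (h1 : deriv f b = -1) (h2 : deriv (deriv f) b = 0)
    (h3 : 0 < iteratedDeriv 3 f b) :
    ∃ δ > 0, ∃ C, ∀ x ∈ Icc (b - δ) b,
      deriv (deriv f) x ^ 2 + f x ^ 2 ≤ C * (1 - deriv f x ^ 2) := by
  have hd (k : ℕ) := iteratedDeriv_comp_const_sub (f := f) (n := k) (s := b)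
  have hd1 : deriv (fun x => f (b - x)) = fun x => -deriv f (b - x) := by simpa using hd 1
  have hd2 : deriv (deriv (fun x => f (b - x))) = fun x => deriv (deriv f) (b - x) := by
    simpa [iteratedDeriv_two_eq_deriv_deriv] using hd 2
  obtain ⟨δ, hδ, C, hC⟩ := exists_sq_add_sq_le_mul_one_sub_deriv_sq_Icc_zero
    (f := fun x => f (b - x)) (hf.comp (contDiff_const.sub contDiff_id)) (by simpa using h0)
    (by simp [hd1, h1]) (by simp [hd2, h2]) (by simp only [hd 3]; norm_num [h3])
  refine ⟨δ, hδ, C, fun x hx => ?_⟩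
  have := hC (b - x) ⟨by linarith [hx.2], by linarith [hx.1]⟩
  rw [hd2, hd1] at this
  simpa using this

theorem scalarCurvature_pos {N M L B w p q s : ℝ} (hN : 1 ≤ N) (hM : 1 ≤ M) (hL : 0 ≤ L)
    (hB : 0 < B) (hw : 0 < w) (hwp : w ^ 2 = 1 - p ^ 2) (hq : q ≤ 0)
    (hBw : B ≤ L * w) (hqw : -q ≤ L * w) (hs : 2 * N * L + 2 * L ^ 3 + 1 ≤ s) :
    0 < N * M * (1 - p ^ 2) / B ^ 2 - (2 * N / B) * (q + p * -w / s)
      - 2 * (p * q / w) / s := by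
  have hs0 : 0 < s := by nlinarith [pow_nonneg hL 3]
  have hp : -1 ≤ p := by nlinarith
  have key : N * M * (1 - p ^ 2) / B ^ 2 - (2 * N / B) * (q + p * -w / s)
      - 2 * (p * q / w) / s
      = (N * M * w ^ 3 * s - 2 * N * q * B * w * s + 2 * N * p * w ^ 2 * B
          - 2 * p * q * B ^ 2) / (B ^ 2 * w * s) := by
    rw [← hwp]
    field_simp
    ring
  rw [key]
  refine div_pos ?_ (by positivity)
  have hq' : 0 ≤ -q := neg_nonneg.2 hq
  have hw3 : 0 < w ^ 3 := by positivity
  have h1 : 0 ≤ -q * B * w * s := by positivity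
  have h2 : -p * w ^ 2 * B ≤ L * w ^ 3 :=
    calc -p * w ^ 2 * B ≤ w ^ 2 * B := by
          nlinarith [mul_nonneg (by linarith : 0 ≤ 1 + p) (by positivity : 0 ≤ w ^ 2 * B)]
      _ ≤ w ^ 2 * (L * w) := mul_le_mul_of_nonneg_left hBw (sq_nonneg w)
      _ = L * w ^ 3 := by ring
  have h3 : p * q * B ^ 2 ≤ L ^ 3 * w ^ 3 :=
    calc p * q * B ^ 2 ≤ -q * B ^ 2 := by
          nlinarith [mul_nonneg (mul_nonneg hq' (by linarith : 0 ≤ 1 + p)) (sq_nonneg B)]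
      _ ≤ (L * w) * (L * w) ^ 2 :=
          mul_le_mul hqw (pow_le_pow_left₀ hB.le hBw 2) (sq_nonneg B) (by positivity)
      _ = L ^ 3 * w ^ 3 := by ring
  have h4 : (2 * N * L + 2 * L ^ 3 + 1) * w ^ 3 ≤ N * M * w ^ 3 * s :=
    calc (2 * N * L + 2 * L ^ 3 + 1) * w ^ 3 ≤ s * w ^ 3 :=
          mul_le_mul_of_nonneg_right hs hw3.le
      _ ≤ N * M * w ^ 3 * s := by
          nlinarith [mul_nonneg (by nlinarith : 0 ≤ N * M - 1) (mul_nonneg hw3.le hs0.le)]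
  nlinarith [mul_nonneg (by linarith : (0 : ℝ) ≤ N) h1,
    mul_le_mul_of_nonneg_left h2 (by linarith : (0 : ℝ) ≤ N)]

namespace BetaConditions

variable {b : ℝ} {β : ℝ → ℝ}

theorem contDiff_three (hβ : BetaConditions b β) : ContDiff ℝ 3 β :=
  hβ.1.of_le (WithTop.coe_le_coe.2 le_top)

theorem deriv_sq_lt_one (hβ : BetaConditions b β) {r : ℝ} (hr : r ∈ Ioo 0 b) :
    deriv β r ^ 2 < 1 := by
  have hβ3 := hβ.contDiff_three
  obtain ⟨-, -, -, h0, hb, -, hconc, -, -, ⟨ε, hε, hε0, hεb⟩, -⟩ := hβ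
  simp only [iteratedDeriv_two_eq_deriv_deriv] at hconc hε0 hεb
  have hcont : Continuous (deriv β) := hβ3.continuous_deriv (by norm_num)
  have hanti : AntitoneOn (deriv β) (Icc 0 b) :=
    antitoneOn_of_deriv_nonpos (convex_Icc 0 b) hcont.continuousOn
      (hβ3.of_le (by norm_num)).differentiable_deriv_two.differentiableOn
      fun x hx => hconc x (interior_subset hx)
  have hstrict {x y : ℝ} (hsub : Ioo x y ⊆ Ioo 0 ε ∪ Ioo (b - ε) b) (hxy : x < y) :
      deriv β y < deriv β x :=
    strictAntiOn_of_deriv_neg (convex_Icc x y) hcont.continuousOn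
      (fun z hz => by
        rw [interior_Icc] at hz
        rcases hsub hz with h | h
        exacts [hε0 z h, hεb z h])
      (left_mem_Icc.2 hxy.le) (right_mem_Icc.2 hxy.le) hxy
  have hlt : deriv β r < 1 := by
    set t := min r (ε / 2)
    have ht : 0 < t := lt_min hr.1 (half_pos hε)
    have hsub : Ioo 0 t ⊆ Ioo 0 ε ∪ Ioo (b - ε) b := fun z hz =>
      Or.inl ⟨hz.1, hz.2.trans_le ((min_le_right _ _).trans (half_le_self hε.le))⟩
    calc deriv β r ≤ deriv β t :=
          hanti ⟨ht.le, (min_le_left _ _).trans hr.2.le⟩ ⟨hr.1.le, hr.2.le⟩ (min_le_left _ _)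
      _ < deriv β 0 := hstrict hsub ht
      _ = 1 := h0
  have hgt : -1 < deriv β r := by
    set t := max r (b - ε / 2)
    have ht : t < b := max_lt hr.2 (by linarith)
    have hsub : Ioo t b ⊆ Ioo 0 ε ∪ Ioo (b - ε) b := fun z hz =>
      Or.inr ⟨lt_of_lt_of_le (by linarith) ((le_max_right _ _).trans hz.1.le), hz.2⟩
    calc -1 = deriv β b := hb.symm
      _ < deriv β t := hstrict hsub ht
      _ ≤ deriv β r :=
          hanti ⟨hr.1.le, hr.2.le⟩ ⟨hr.1.le.trans (le_max_left _ _), ht.le⟩ (le_max_left _ _)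
  nlinarith

theorem exists_sq_add_sq_le_mul (hβ : BetaConditions b β) :
    ∃ C, ∀ r ∈ Ioo 0 b, deriv (deriv β) r ^ 2 + β r ^ 2 ≤ C * (1 - deriv β r ^ 2) := by
  have hβ3 := hβ.contDiff_three
  have hw : ∀ r ∈ Ioo 0 b, 0 < 1 - deriv β r ^ 2 := fun r hr => sub_pos.2 (hβ.deriv_sq_lt_one hr)
  obtain ⟨-, h0, hb0, h1, hb1, heven, -, h3, hb3, -, -⟩ := hβ
  obtain ⟨h2, hb2⟩ := heven 1 le_rfl
  rw [mul_one, iteratedDeriv_two_eq_deriv_deriv] at h2 hb2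
  obtain ⟨δ₀, hδ₀, C₀, hC₀⟩ := exists_sq_add_sq_le_mul_one_sub_deriv_sq_Icc_zero hβ3 h0 h1 h2 h3
  obtain ⟨δ₁, hδ₁, C₁, hC₁⟩ := exists_sq_add_sq_le_mul_one_sub_deriv_sq_Icc_sub hβ3 hb0 hb1 hb2 hb3
  have hq : Continuous (deriv (deriv β)) := (hβ3.deriv' (n := 2)).continuous_deriv (by norm_num)
  have hp : Continuous (deriv β) := hβ3.continuous_deriv (by norm_num)
  obtain ⟨C₂, hC₂⟩ := (isCompact_Icc (a := δ₀) (b := b - δ₁)).exists_le_mul_of_pos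
    (f := fun r => deriv (deriv β) r ^ 2 + β r ^ 2) (g := fun r => 1 - deriv β r ^ 2)
    ((hq.pow 2).add (hβ3.continuous.pow 2)).continuousOn
    (continuous_const.sub (hp.pow 2)).continuousOn
    fun r hr => hw r ⟨hδ₀.trans_le hr.1, by linarith [hr.2]⟩
  refine ⟨max C₀ (max C₁ C₂), fun r hr => ?_⟩
  obtain ⟨C, hC, hle⟩ : ∃ C ≤ max C₀ (max C₁ C₂),
      deriv (deriv β) r ^ 2 + β r ^ 2 ≤ C * (1 - deriv β r ^ 2) := by
    rcases le_or_gt r δ₀ with h | h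
    · exact ⟨C₀, le_max_left _ _, hC₀ r ⟨hr.1.le, h⟩⟩
    rcases le_or_gt (b - δ₁) r with h' | h'
    · exact ⟨C₁, (le_max_left _ _).trans (le_max_right _ _), hC₁ r ⟨h', hr.2.le⟩⟩
    · exact ⟨C₂, (le_max_right _ _).trans (le_max_right _ _), hC₂ r ⟨h.le, h'.le⟩⟩
  exact hle.trans (mul_le_mul_of_nonneg_right hC (hw r hr).le)

theorem exists_le_mul_sqrt (hβ : BetaConditions b β) :
    ∃ L ≥ 0, ∀ r ∈ Ioo 0 b, β r ≤ L * √(1 - deriv β r ^ 2) ∧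
      -deriv (deriv β) r ≤ L * √(1 - deriv β r ^ 2) := by
  obtain ⟨C, hC⟩ := hβ.exists_sq_add_sq_le_mul
  refine ⟨√C, sqrt_nonneg C, fun r hr => ?_⟩
  have hw := sq_sqrt (sub_pos.2 (hβ.deriv_sq_lt_one hr)).le
  have hsum := hC r hr
  rw [← hw] at hsum
  exact ⟨(le_abs_self _).trans (abs_le_sqrt_mul_of_sq_le (sqrt_nonneg _) (by nlinarith)),
    (neg_le_abs _).trans (abs_le_sqrt_mul_of_sq_le (sqrt_nonneg _) (by nlinarith))⟩

end BetaConditions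

theorem bent_cylinder_psc_general (n : ℕ) (hn : 3 ≤ n) (b : ℝ)
    (β : ℝ → ℝ) (hβ : BetaConditions b β)
    (α : ℝ → ℝ)
    (hα : α = fun r => (∫ u in (0 : ℝ)..b, Real.sqrt (1 - (deriv β u) ^ 2))
      - ∫ u in (0 : ℝ)..r, Real.sqrt (1 - (deriv β u) ^ 2)) :
    ∃ c₀ > (0 : ℝ), ∀ c ≥ c₀, ∀ r ∈ Set.Ioo (0 : ℝ) b,
      0 < ((n : ℝ) - 1) * ((n : ℝ) - 2) * (1 - (deriv β r) ^ 2) / (β r) ^ 2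
          - (2 * ((n : ℝ) - 1) / β r)
            * (deriv (deriv β) r + deriv β r * deriv α r / (c + α r))
          - 2 * deriv (deriv α) r / (c + α r) := by
  have hcont : Continuous fun u => √(1 - deriv β u ^ 2) :=
    (continuous_const.sub ((hβ.contDiff_three.continuous_deriv (by norm_num)).pow 2)).sqrt
  have hdα : deriv α = fun r => -√(1 - deriv β r ^ 2) := hα ▸ deriv_const_sub_integral hcont _ _
  have hN : (2 : ℝ) ≤ n - 1 := by
    have : (3 : ℝ) ≤ n := by exact_mod_cast hn
    linarith
  obtain ⟨L, hL, hLβ⟩ := hβ.exists_le_mul_sqrt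
  refine ⟨2 * ((n : ℝ) - 1) * L + 2 * L ^ 3 + 1, by positivity, fun c hc r hr => ?_⟩
  have hp := hβ.deriv_sq_lt_one hr
  have hαr : 0 ≤ α r := hα ▸ integral_sub_integral_nonneg hcont (fun u => sqrt_nonneg _) hr.2.le
  rw [hdα, deriv_neg_sqrt_one_sub_sq
    ((hβ.contDiff_three.of_le (by norm_num)).differentiable_deriv_two r) hp]
  obtain ⟨-, -, -, -, -, -, hconc, -, -, -, hpos⟩ := hβ
  exact scalarCurvature_pos (by linarith) (by linarith) hL (hpos r hr)
    (sqrt_pos.2 (sub_pos.2 hp)) (sq_sqrt (sub_pos.2 hp).le)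
    (iteratedDeriv_two_eq_deriv_deriv ▸ hconc r (Ioo_subset_Icc_self hr)) (hLβ r hr).1 (hLβ r hr).2
    (by linarith)

/-- For `n ≥ 3`, `β` satisfying conditions (beta) on `[0,b]`, and
`α(r) = α₀ - ∫₀^r √(1 - β'(u)²) du` with `α₀ = ∫₀^b √(1 - β'(u)²) du`, there is a
`c₀ > 0` such that for all `c ≥ c₀` the scalar curvature of the bent cylinder metric
`dr² + β(r)² ds²_{n-1} + (c + α(r))² dl²`, namely
`(n-1)(n-2)(1-β'(r)²)/β(r)² - (2(n-1)/β(r))(β''(r) + β'(r)α'(r)/(c+α(r))) - 2α''(r)/(c+α(r))`,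
is positive for all `r ∈ (0,b)`. -/
theorem bent_cylinder_psc (n : ℕ) (hn : 3 ≤ n) (b : ℝ) (hb : 0 < b)
    (β : ℝ → ℝ) (hβ : BetaConditions b β)
    (α : ℝ → ℝ)
    (hα : α = fun r => (∫ u in (0 : ℝ)..b, Real.sqrt (1 - (deriv β u) ^ 2))
      - ∫ u in (0 : ℝ)..r, Real.sqrt (1 - (deriv β u) ^ 2)) :
    ∃ c₀ > (0 : ℝ), ∀ c ≥ c₀, ∀ r ∈ Set.Ioo (0 : ℝ) b,
      0 < ((n : ℝ) - 1) * ((n : ℝ) - 2) * (1 - (deriv β r) ^ 2) / (β r) ^ 2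
          - (2 * ((n : ℝ) - 1) / β r)
            * (deriv (deriv β) r + deriv β r * deriv α r / (c + α r))
          - 2 * deriv (deriv α) r / (c + α r) :=
  bent_cylinder_psc_general n hn b β hβ α hα
end

section
/- Let q ≥ 2 be an integer and b, B > 0. Let ω : ℝ → ℝ be smooth with ω(r) > 0 for all r ∈ (0,b], ω'(r) ≥ 0 for all r ∈ [0,b], and −2q·ω''(r)/ω(r) + q(q−1)·(1 − ω'(r)²)/ω(r)² > 0 for all r ∈ (0,b]. Let c : ℝ → ℝ be smooth with c(0) = 0, c(t) ∈ (0,b] for all t ∈ (0,B], and 0 < c'(t) ≤ 1 and c''(t) ≤ 0 for all t ∈ [0,B]. Then for all t ∈ (0,B]: −2q·(ω∘c)''(t)/ω(c(t)) + q(q−1)·(1 − ((ω∘c)'(t))²)/ω(c(t))² > 0. (That is, the warped-product metric dt² + (ω∘c)(t)²·ds_q² obtained by reparameterising by the concave stretching function c still has positive scalar curvature.) -/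
/-! The chain rule writes the curvature of `ω ∘ c` at `t`, with `r = c t`, as
`c'² · S_ω(r) - 2q ω'(r) c''(t) / ω(r) + q(q-1)(1 - c'²) / ω(r)²`,
where `S_ω` is the curvature of `ω`. The first term is positive by hypothesis, the second is
nonnegative because `ω' ≥ 0` and `c'' ≤ 0`, and the third because `c'² ≤ 1`. -/

noncomputable def warpedScalarCurvature (q : ℕ) (f f' f'' : ℝ) : ℝ :=
  -2 * (q : ℝ) * f'' / f + (q : ℝ) * ((q : ℝ) - 1) * (1 - f' ^ 2) / f ^ 2

theorem warpedScalarCurvature_chain (q : ℕ) {a : ℝ} (ha : a ≠ 0) (u w p k : ℝ) :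
    warpedScalarCurvature q a (u * p) (w * p ^ 2 + u * k)
      = p ^ 2 * warpedScalarCurvature q a u w - 2 * q * (u * k) / a
        + q * (q - 1) * (1 - p ^ 2) / a ^ 2 := by
  unfold warpedScalarCurvature
  field_simp
  ring

theorem warpedScalarCurvature_chain_pos (q : ℕ) {a u w p k : ℝ}
    (hS : 0 < warpedScalarCurvature q a u w) (ha : 0 < a) (hu : 0 ≤ u)
    (hp : 0 < p) (hp1 : p ≤ 1) (hk : k ≤ 0) :
    0 < warpedScalarCurvature q a (u * p) (w * p ^ 2 + u * k) := by
  rw [warpedScalarCurvature_chain q ha.ne']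
  have hstretch : 0 < p ^ 2 * warpedScalarCurvature q a u w := by positivity
  have hconcave : 0 ≤ -(2 * q * (u * k) / a) := by
    have : u * k ≤ 0 := mul_nonpos_of_nonneg_of_nonpos hu hk
    rw [← neg_div]
    exact div_nonneg (by nlinarith [q.cast_nonneg (α := ℝ)]) ha.le
  have hslow : 0 ≤ (q : ℝ) * (q - 1) * (1 - p ^ 2) / a ^ 2 := by
    have hq : (0 : ℝ) ≤ q * (q - 1) := by
      rcases q with _ | q
      · simp
      · push_cast; nlinarith
    have hp2 : p ^ 2 ≤ 1 := by nlinarith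
    exact div_nonneg (mul_nonneg hq (by linarith)) (by positivity)
  linarith

theorem deriv_deriv_comp {f g : ℝ → ℝ} (hf : ContDiff ℝ 2 f) (hg : ContDiff ℝ 2 g) (x : ℝ) :
    deriv (deriv (f ∘ g)) x
      = deriv (deriv f) (g x) * deriv g x ^ 2 + deriv f (g x) * deriv (deriv g) x := by
  obtain ⟨hf1, -, hf'⟩ := contDiff_succ_iff_deriv.mp (show ContDiff ℝ (1 + 1) f from hf)
  obtain ⟨hg1, -, hg'⟩ := contDiff_succ_iff_deriv.mp (show ContDiff ℝ (1 + 1) g from hg)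
  have hf'd : Differentiable ℝ (deriv f) := hf'.differentiable one_ne_zero
  have hg'd : Differentiable ℝ (deriv g) := hg'.differentiable one_ne_zero
  have hchain : deriv (f ∘ g) = (deriv f ∘ g) * deriv g :=
    funext fun y => deriv_comp y (hf1 (g y)) (hg1 y)
  rw [hchain, deriv_mul ((hf'd.comp hg1) x) (hg'd x), deriv_comp x (hf'd (g x)) (hg1 x)]
  simp only [Function.comp_apply]
  ring

theorem stretched_warping_function_psc_general (q : ℕ) (b B : ℝ)
    (ω : ℝ → ℝ) (hω : ContDiff ℝ (⊤ : ℕ∞) ω)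
    (hωpos : ∀ r ∈ Set.Ioc (0 : ℝ) b, 0 < ω r)
    (hω' : ∀ r ∈ Set.Icc (0 : ℝ) b, 0 ≤ deriv ω r)
    (hωpsc : ∀ r ∈ Set.Ioc (0 : ℝ) b,
      0 < -2 * (q : ℝ) * deriv (deriv ω) r / ω r
          + (q : ℝ) * ((q : ℝ) - 1) * (1 - (deriv ω r) ^ 2) / (ω r) ^ 2)
    (c : ℝ → ℝ) (hc : ContDiff ℝ (⊤ : ℕ∞) c)
    (hcmem : ∀ t ∈ Set.Ioc (0 : ℝ) B, c t ∈ Set.Ioc (0 : ℝ) b)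
    (hc' : ∀ t ∈ Set.Icc (0 : ℝ) B, 0 < deriv c t ∧ deriv c t ≤ 1)
    (hc'' : ∀ t ∈ Set.Icc (0 : ℝ) B, deriv (deriv c) t ≤ 0) :
    ∀ t ∈ Set.Ioc (0 : ℝ) B,
      0 < -2 * (q : ℝ) * deriv (deriv (ω ∘ c)) t / ω (c t)
          + (q : ℝ) * ((q : ℝ) - 1) * (1 - (deriv (ω ∘ c) t) ^ 2) / (ω (c t)) ^ 2 := by
  intro t ht
  have htI : t ∈ Set.Icc 0 B := Set.Ioc_subset_Icc_self ht
  have hct := hcmem t ht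
  have hω2 : ContDiff ℝ 2 ω := hω.of_le (WithTop.coe_le_coe.mpr le_top)
  have hc2 : ContDiff ℝ 2 c := hc.of_le (WithTop.coe_le_coe.mpr le_top)
  have hcomp : deriv (ω ∘ c) t = deriv ω (c t) * deriv c t :=
    deriv_comp t (hω2.differentiable two_ne_zero _) (hc2.differentiable two_ne_zero _)
  change 0 < warpedScalarCurvature q _ _ _
  rw [deriv_deriv_comp hω2 hc2, hcomp]
  exact warpedScalarCurvature_chain_pos q (hωpsc _ hct) (hωpos _ hct)
    (hω' _ (Set.Ioc_subset_Icc_self hct)) (hc' t htI).1 (hc' t htI).2 (hc'' t htI)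

/-- Reparameterising a positive-scalar-curvature warping function by a concave stretching
function preserves positive scalar curvature.  If `ω` is smooth with `ω > 0` on `(0,b]`,
`ω' ≥ 0` on `[0,b]` and `-2q ω''/ω + q(q-1)(1-ω'²)/ω² > 0` on `(0,b]`, and `c` is smooth
with `c(0) = 0`, `c(t) ∈ (0,b]` for `t ∈ (0,B]`, `0 < c' ≤ 1` and `c'' ≤ 0` on `[0,B]`,
then `-2q (ω∘c)''/(ω∘c) + q(q-1)(1-((ω∘c)')²)/(ω∘c)² > 0` on `(0,B]`; i.e. the warped
product metric `dt² + (ω∘c)(t)² ds_q²` still has positive scalar curvature. -/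
theorem stretched_warping_function_psc (q : ℕ) (hq : 2 ≤ q) (b B : ℝ)
    (hb : 0 < b) (hB : 0 < B)
    (ω : ℝ → ℝ) (hω : ContDiff ℝ (⊤ : ℕ∞) ω)
    (hωpos : ∀ r ∈ Set.Ioc (0 : ℝ) b, 0 < ω r)
    (hω' : ∀ r ∈ Set.Icc (0 : ℝ) b, 0 ≤ deriv ω r)
    (hωpsc : ∀ r ∈ Set.Ioc (0 : ℝ) b,
      0 < -2 * (q : ℝ) * deriv (deriv ω) r / ω r
          + (q : ℝ) * ((q : ℝ) - 1) * (1 - (deriv ω r) ^ 2) / (ω r) ^ 2)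
    (c : ℝ → ℝ) (hc : ContDiff ℝ (⊤ : ℕ∞) c) (hc0 : c 0 = 0)
    (hcmem : ∀ t ∈ Set.Ioc (0 : ℝ) B, c t ∈ Set.Ioc (0 : ℝ) b)
    (hc' : ∀ t ∈ Set.Icc (0 : ℝ) B, 0 < deriv c t ∧ deriv c t ≤ 1)
    (hc'' : ∀ t ∈ Set.Icc (0 : ℝ) B, deriv (deriv c) t ≤ 0) :
    ∀ t ∈ Set.Ioc (0 : ℝ) B,
      0 < -2 * (q : ℝ) * deriv (deriv (ω ∘ c)) t / ω (c t)
          + (q : ℝ) * ((q : ℝ) - 1) * (1 - (deriv (ω ∘ c) t) ^ 2) / (ω (c t)) ^ 2 :=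
  stretched_warping_function_psc_general q b B ω hω hωpos hω' hωpsc c hc hcmem hc' hc''
end
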